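/- arXiv:1707.08656 — 5 statements merged into one kernel-verified Lean document; each statement's English description precedes it below -/
import Mathlib

section
/- Let G be a finite simple graph of order n and size m, and let k be an integer with 1 ≤ k ≤ Δ(G). If k ≤ 2(n − √(n² − n − 2m)) or δ(G) ≥ k − 1, then L_k(G) ≤ n + k/2 − √(k²/4 + (1 − k)n + 2m). -/
/-!
Let `B` be a maximum `k`-limited packing and `C` its complement, `c = |C|`. Count
`∑ᵥ |N[v]| = 2m + n` by splitting each `N[v]` along `B` and `C`: the `B`-parts contribute at
most `nk` by the packing condition, and since `w ∈ N[v] ↔ v ∈ N[w]` the `C`-parts add up to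
`∑_{w ∈ C} |N[w]| ≤ c (k + c)`. Hence `2m + n ≤ nk + ck + c²`, i.e.
`(c + k/2)² ≥ k²/4 + (1 - k) n + 2m`, and `|B| = n - c` gives the bound.
-/

open Finset

/-- A set `B` is a `k`-limited packing in `G` if every closed neighbourhood
contains at most `k` vertices of `B`. -/
def SimpleGraph.IsLimitedPacking {V : Type*} [Fintype V] [DecidableEq V]
    (G : SimpleGraph V) [DecidableRel G.Adj] (k : ℕ) (B : Finset V) : Prop :=
  ∀ v : V, ((insert v (G.neighborFinset v)) ∩ B).card ≤ k

/-- The `k`-limited packing number of `G`. -/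
noncomputable def SimpleGraph.limitedPackingNumber {V : Type*} [Fintype V] [DecidableEq V]
    (G : SimpleGraph V) [DecidableRel G.Adj] (k : ℕ) : ℕ :=
  sSup {n : ℕ | ∃ B : Finset V, G.IsLimitedPacking k B ∧ B.card = n}

namespace SimpleGraph

variable {V : Type*} [Fintype V] [DecidableEq V] (G : SimpleGraph V) [DecidableRel G.Adj]

def closedNeighborFinset (v : V) : Finset V := insert v (G.neighborFinset v)

lemma card_closedNeighborFinset (v : V) : #(G.closedNeighborFinset v) = G.degree v + 1 :=
  card_insert_of_notMem (by simp)

lemma mem_closedNeighborFinset_comm {v w : V} :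
    w ∈ G.closedNeighborFinset v ↔ v ∈ G.closedNeighborFinset w := by
  simp only [closedNeighborFinset, mem_insert, mem_neighborFinset, G.adj_comm, eq_comm]

lemma sum_card_closedNeighborFinset :
    ∑ v, #(G.closedNeighborFinset v) = 2 * #G.edgeFinset + Fintype.card V := by
  simp [card_closedNeighborFinset, sum_add_distrib, sum_degrees_eq_twice_card_edges]

lemma sum_card_closedNeighborFinset_inter (S : Finset V) :
    ∑ v, #(G.closedNeighborFinset v ∩ S) = ∑ w ∈ S, #(G.closedNeighborFinset w) := by
  have key := sum_card_bipartiteAbove_eq_sum_card_bipartiteBelow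
    (fun v w => w ∈ G.closedNeighborFinset v) (s := univ) (t := S)
  convert key using 2 with v _ w
  · rw [bipartiteAbove, filter_mem_eq_inter, inter_comm]
  · congr 1
    ext
    simp [bipartiteBelow, G.mem_closedNeighborFinset_comm]

variable {G}

lemma IsLimitedPacking.sum_card_closedNeighborFinset_inter_le {k : ℕ} {B : Finset V}
    (hB : G.IsLimitedPacking k B) :
    ∑ v, #(G.closedNeighborFinset v ∩ B) ≤ Fintype.card V * k :=
  (sum_le_sum (g := fun _ => k) fun v _ => hB v).trans_eq (by simp)

lemma IsLimitedPacking.two_mul_card_edgeFinset_add_card_le {k : ℕ} {B : Finset V}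
    (hB : G.IsLimitedPacking k B) :
    2 * #G.edgeFinset + Fintype.card V ≤ Fintype.card V * k + #Bᶜ * k + #Bᶜ ^ 2 := by
  have split (v : V) : #(G.closedNeighborFinset v) =
      #(G.closedNeighborFinset v ∩ B) + #(G.closedNeighborFinset v ∩ Bᶜ) := by
    rw [← sdiff_eq_inter_compl, card_inter_add_card_sdiff]
  have outside (w : V) : #(G.closedNeighborFinset w) ≤ k + #Bᶜ := by
    rw [split]
    exact add_le_add (hB w) (card_le_card inter_subset_right)
  calc 2 * #G.edgeFinset + Fintype.card V
      = ∑ v, #(G.closedNeighborFinset v ∩ B) + ∑ v, #(G.closedNeighborFinset v ∩ Bᶜ) := by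
        rw [← sum_card_closedNeighborFinset, ← sum_add_distrib]
        exact sum_congr rfl fun v _ => split v
    _ ≤ Fintype.card V * k + ∑ w ∈ Bᶜ, (k + #Bᶜ) := by
        rw [sum_card_closedNeighborFinset_inter G Bᶜ]
        exact add_le_add hB.sum_card_closedNeighborFinset_inter_le
          (sum_le_sum fun w _ => outside w)
    _ = Fintype.card V * k + #Bᶜ * k + #Bᶜ ^ 2 := by
        rw [sum_const, smul_eq_mul]
        ring

lemma IsLimitedPacking.card_le {k : ℕ} {B : Finset V} (hB : G.IsLimitedPacking k B) :
    (#B : ℝ) ≤ Fintype.card V + k / 2 -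
      √((k : ℝ) ^ 2 / 4 + (1 - (k : ℝ)) * Fintype.card V + 2 * #G.edgeFinset) := by
  have hcount : (2 * #G.edgeFinset + Fintype.card V : ℝ) ≤
      Fintype.card V * k + #Bᶜ * k + #Bᶜ ^ 2 := by
    exact_mod_cast hB.two_mul_card_edgeFinset_add_card_le
  have hcompl : (#B + #Bᶜ : ℝ) = Fintype.card V := by exact_mod_cast card_add_card_compl B
  have hsqrt : √((k : ℝ) ^ 2 / 4 + (1 - (k : ℝ)) * Fintype.card V + 2 * #G.edgeFinset) ≤
      #Bᶜ + k / 2 :=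
    Real.sqrt_le_iff.mpr ⟨by positivity, by nlinarith⟩
  linarith

variable (G)

lemma exists_isLimitedPacking_card_eq_limitedPackingNumber (k : ℕ) :
    ∃ B : Finset V, G.IsLimitedPacking k B ∧ #B = G.limitedPackingNumber k :=
  Nat.sSup_mem (s := {n | ∃ B : Finset V, G.IsLimitedPacking k B ∧ #B = n})
    ⟨0, ∅, fun v => by simp, rfl⟩
    ⟨Fintype.card V, by rintro _ ⟨B, -, rfl⟩; exact card_le_univ B⟩

end SimpleGraph

theorem limited_packing_upper_bound_general {V : Type*} [Fintype V] [DecidableEq V]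
    (G : SimpleGraph V) [DecidableRel G.Adj] (k n m : ℕ)
    (hn : n = Fintype.card V) (hm : m = G.edgeFinset.card) :
    (G.limitedPackingNumber k : ℝ) ≤
      n + k / 2 - Real.sqrt ((k : ℝ) ^ 2 / 4 + (1 - (k : ℝ)) * n + 2 * m) := by
  obtain ⟨B, hB, hcard⟩ := G.exists_isLimitedPacking_card_eq_limitedPackingNumber k
  subst hn hm
  rw [← hcard]
  exact hB.card_le

/-- Upper bound on the `k`-limited packing number in terms of order `n` and size `m`. -/
theorem limited_packing_upper_bound {V : Type*} [Fintype V] [DecidableEq V]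
    (G : SimpleGraph V) [DecidableRel G.Adj] (k n m : ℕ)
    (hk1 : 1 ≤ k) (hk2 : k ≤ G.maxDegree)
    (hn : n = Fintype.card V) (hm : m = G.edgeFinset.card)
    (hcond : (k : ℝ) ≤ 2 * ((n : ℝ) - Real.sqrt ((n : ℝ) ^ 2 - n - 2 * m)) ∨
      k - 1 ≤ G.minDegree) :
    (G.limitedPackingNumber k : ℝ) ≤
      n + k / 2 - Real.sqrt ((k : ℝ) ^ 2 / 4 + (1 - (k : ℝ)) * n + 2 * m) :=
  limited_packing_upper_bound_general G k n m hn hm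
end

section
/- Let G be a finite connected simple graph of order n ≥ 2. Then ρₒ(G) = n/δ(G) if and only if there exists a set B ⊆ V(G) such that the subgraph of G induced on B is a disjoint union of copies of K₂ (i.e., it is 1-regular), every vertex of B has degree exactly δ(G) in G (so each vertex of B has exactly δ(G) − 1 neighbours in V(G) ∖ B), and every vertex of V(G) ∖ B has exactly one neighbour in B. -/
/-!
Double counting the pairs `(v, w)` with `v ∈ B` adjacent to `w` gives
`∑_{v ∈ B} deg v = ∑_w |N(w) ∩ B|`, and `B` is an open packing exactly when every term
on the right is at most `1`. Hence `δ · |B| ≤ ∑_{v ∈ B} deg v ≤ n` for every open packing,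
so `ρₒ(G) · δ ≤ n`, with equality precisely for a packing whose vertices all have degree `δ`
and that meets every neighbourhood exactly once. Since connectedness and `n ≥ 2` force
`δ > 0`, the equation `ρₒ(G) · δ = n` is the same as `ρₒ(G) = n / δ`.
-/

open Finset

/-- A set `B` is an open packing in `G` if distinct vertices of `B`
have disjoint open neighbourhoods. -/
def SimpleGraph.IsOpenPacking {V : Type*} (G : SimpleGraph V) (B : Finset V) : Prop :=
  ∀ u ∈ B, ∀ v ∈ B, u ≠ v → G.neighborSet u ∩ G.neighborSet v = ∅

/-- The open packing number of `G`. -/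
noncomputable def SimpleGraph.openPackingNumber {V : Type*} [Fintype V]
    (G : SimpleGraph V) : ℕ :=
  sSup {n : ℕ | ∃ B : Finset V, G.IsOpenPacking B ∧ B.card = n}

namespace SimpleGraph

section OpenPackingNumber

variable {V : Type*} [Fintype V] (G : SimpleGraph V)

theorem bddAbove_openPacking_cards :
    BddAbove {n : ℕ | ∃ B : Finset V, G.IsOpenPacking B ∧ #B = n} := by
  refine ⟨Fintype.card V, ?_⟩
  rintro n ⟨B, -, rfl⟩
  exact card_le_univ B

theorem exists_isOpenPacking_card_eq_openPackingNumber :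
    ∃ B : Finset V, G.IsOpenPacking B ∧ #B = G.openPackingNumber :=
  have hempty : ∃ B : Finset V, G.IsOpenPacking B ∧ #B = 0 :=
    ⟨∅, by simp [IsOpenPacking], card_empty⟩
  Nat.sSup_mem (Set.nonempty_of_mem hempty) G.bddAbove_openPacking_cards

theorem IsOpenPacking.card_le_openPackingNumber {G : SimpleGraph V} {B : Finset V}
    (hB : G.IsOpenPacking B) : #B ≤ G.openPackingNumber :=
  le_csSup G.bddAbove_openPacking_cards ⟨B, hB, rfl⟩

end OpenPackingNumber

variable {V : Type*} [Fintype V] {G : SimpleGraph V} [DecidableRel G.Adj]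

theorem minDegree_mul_card_le_sum_degree (B : Finset V) :
    G.minDegree * #B ≤ ∑ v ∈ B, G.degree v := by
  rw [mul_comm, ← smul_eq_mul, ← sum_const]
  exact sum_le_sum fun v _ => G.minDegree_le_degree v

variable [DecidableEq V]

theorem sum_degree_eq_sum_card_neighborFinset_inter (B : Finset V) :
    ∑ v ∈ B, G.degree v = ∑ w, #(G.neighborFinset w ∩ B) := by
  have := sum_card_bipartiteAbove_eq_sum_card_bipartiteBelow (s := B) (t := univ) (r := G.Adj)
  convert this using 3 with v _ w
  · rw [← card_neighborFinset_eq_degree, neighborFinset_eq_filter]; rfl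
  · rw [inter_comm, neighborFinset_eq_filter, ← filter_mem_eq_inter]
    simp [bipartiteBelow, adj_comm]

theorem isOpenPacking_iff_card_neighborFinset_inter_le_one {B : Finset V} :
    G.IsOpenPacking B ↔ ∀ w, #(G.neighborFinset w ∩ B) ≤ 1 := by
  simp only [IsOpenPacking, card_le_one, mem_inter, mem_neighborFinset,
    Set.eq_empty_iff_forall_notMem, Set.mem_inter_iff, mem_neighborSet]
  constructor
  · rintro hB w u ⟨hwu, hu⟩ v ⟨hwv, hv⟩
    by_contra huv
    exact hB u hu v hv huv w ⟨hwu.symm, hwv.symm⟩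
  · rintro hB u hu v hv huv w ⟨huw, hvw⟩
    exact huv (hB w u ⟨huw.symm, hu⟩ v ⟨hvw.symm, hv⟩)

theorem IsOpenPacking.sum_degree_le {B : Finset V} (hB : G.IsOpenPacking B) :
    ∑ v ∈ B, G.degree v ≤ Fintype.card V := by
  rw [sum_degree_eq_sum_card_neighborFinset_inter, ← card_univ, card_eq_sum_ones]
  exact sum_le_sum fun w _ => isOpenPacking_iff_card_neighborFinset_inter_le_one.mp hB w

theorem IsOpenPacking.sum_degree_eq_card_iff {B : Finset V} (hB : G.IsOpenPacking B) :
    ∑ v ∈ B, G.degree v = Fintype.card V ↔ ∀ w, #(G.neighborFinset w ∩ B) = 1 := by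
  rw [sum_degree_eq_sum_card_neighborFinset_inter, ← card_univ, card_eq_sum_ones,
    sum_eq_sum_iff_of_le fun w _ => isOpenPacking_iff_card_neighborFinset_inter_le_one.mp hB w]
  simp

theorem openPackingNumber_mul_minDegree_le :
    G.openPackingNumber * G.minDegree ≤ Fintype.card V := by
  obtain ⟨B, hB, hcard⟩ := G.exists_isOpenPacking_card_eq_openPackingNumber
  calc G.openPackingNumber * G.minDegree = G.minDegree * #B := by rw [hcard, mul_comm]
    _ ≤ ∑ v ∈ B, G.degree v := minDegree_mul_card_le_sum_degree B
    _ ≤ Fintype.card V := hB.sum_degree_le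

theorem openPackingNumber_mul_minDegree_eq_card_iff :
    G.openPackingNumber * G.minDegree = Fintype.card V ↔
      ∃ B : Finset V, (∀ w, #(G.neighborFinset w ∩ B) = 1) ∧
        ∀ v ∈ B, G.degree v = G.minDegree := by
  constructor
  · intro h
    obtain ⟨B, hB, hcard⟩ := G.exists_isOpenPacking_card_eq_openPackingNumber
    have hmin : G.minDegree * #B = ∑ v ∈ B, G.degree v :=
      le_antisymm (minDegree_mul_card_le_sum_degree B)
        (hB.sum_degree_le.trans (by rw [← h, hcard, mul_comm]))
    refine ⟨B, hB.sum_degree_eq_card_iff.mp (by rw [← hmin, hcard, mul_comm, h]), ?_⟩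
    rw [mul_comm, ← smul_eq_mul, ← sum_const,
      sum_eq_sum_iff_of_le fun v _ => G.minDegree_le_degree v] at hmin
    exact fun v hv => (hmin v hv).symm
  · rintro ⟨B, hone, hdeg⟩
    have hB : G.IsOpenPacking B :=
      isOpenPacking_iff_card_neighborFinset_inter_le_one.mpr fun w => (hone w).le
    refine le_antisymm openPackingNumber_mul_minDegree_le ?_
    calc Fintype.card V = ∑ v ∈ B, G.degree v := (hB.sum_degree_eq_card_iff.mpr hone).symm
      _ = #B * G.minDegree := by rw [sum_congr rfl hdeg, sum_const, smul_eq_mul]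
      _ ≤ G.openPackingNumber * G.minDegree :=
        Nat.mul_le_mul_right _ hB.card_le_openPackingNumber

end SimpleGraph

/-- Characterization of connected graphs of order `n ≥ 2` with `ρₒ(G) = n / δ(G)`:
equality holds iff there is a set `B` of vertices such that the induced subgraph
on `B` is `1`-regular (a disjoint union of copies of `K₂`), every vertex of `B`
has degree exactly `δ(G)` in `G`, and every vertex outside `B` has exactly one
neighbour in `B`. -/
theorem open_packing_eq_card_div_minDegree_iff {V : Type*} [Fintype V] [DecidableEq V]
    (G : SimpleGraph V) [DecidableRel G.Adj]
    (hconn : G.Connected) (hn : 2 ≤ Fintype.card V) :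
    (G.openPackingNumber : ℝ) = (Fintype.card V : ℝ) / G.minDegree ↔
    ∃ B : Finset V,
      (∀ v ∈ B, ((G.neighborFinset v) ∩ B).card = 1) ∧
      (∀ v ∈ B, G.degree v = G.minDegree) ∧
      (∀ v ∉ B, ((G.neighborFinset v) ∩ B).card = 1) := by
  have : Nontrivial V := Fintype.one_lt_card_iff_nontrivial.mp hn
  have hδ : (G.minDegree : ℝ) ≠ 0 := by
    exact_mod_cast hconn.preconnected.minDegree_pos_of_nontrivial.ne'
  rw [eq_div_iff hδ, ← Nat.cast_mul, Nat.cast_inj, G.openPackingNumber_mul_minDegree_eq_card_iff]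
  refine exists_congr fun B =>
    ⟨fun ⟨hone, hdeg⟩ => ⟨fun v _ => hone v, hdeg, fun v _ => hone v⟩,
      fun ⟨hin, hdeg, hout⟩ => ⟨fun v => ?_, hdeg⟩⟩
  by_cases hv : v ∈ B
  · exact hin v hv
  · exact hout v hv
end

section
/- Let G be a finite simple graph of order n with δ(G) ≥ 2, and let B be a (δ(G) − 1)-limited packing in G of maximum cardinality. Then V(G) ∖ B is a double dominating set in G; consequently γ×₂(G) + L_{δ(G)−1}(G) ≤ n. -/
open Finset

/-- A set `D` is a double dominating set in `G` if every closed neighbourhood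
contains at least two vertices of `D`. -/
def SimpleGraph.IsDoubleDominating {V : Type*} [Fintype V] [DecidableEq V]
    (G : SimpleGraph V) [DecidableRel G.Adj] (D : Finset V) : Prop :=
  ∀ v : V, 2 ≤ ((insert v (G.neighborFinset v)) ∩ D).card

/-- The double domination number of `G`. -/
noncomputable def SimpleGraph.doubleDominationNumber {V : Type*} [Fintype V] [DecidableEq V]
    (G : SimpleGraph V) [DecidableRel G.Adj] : ℕ :=
  sInf {n : ℕ | ∃ D : Finset V, G.IsDoubleDominating D ∧ D.card = n}

/-! Every closed neighbourhood has at least `δ(G) + 1` vertices, and a `k`-limited packing with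
`k < δ(G)` takes at most `δ(G) - 1` of them, so its complement keeps at least two. -/

namespace SimpleGraph

variable {V : Type*} [Fintype V] [DecidableEq V] (G : SimpleGraph V) [DecidableRel G.Adj]

theorem card_insert_neighborFinset (v : V) :
    (insert v (G.neighborFinset v)).card = G.degree v + 1 := by
  rw [card_insert_of_notMem (by simp), card_neighborFinset_eq_degree]

theorem minDegree_add_one_le_card_insert_neighborFinset (v : V) :
    G.minDegree + 1 ≤ (insert v (G.neighborFinset v)).card := by
  rw [card_insert_neighborFinset]
  exact Nat.succ_le_succ (G.minDegree_le_degree v)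

variable {G}

theorem IsLimitedPacking.isDoubleDominating_compl {k : ℕ} {B : Finset V}
    (hB : G.IsLimitedPacking k B) (hk : k < G.minDegree) : G.IsDoubleDominating Bᶜ := by
  intro v
  have hsplit := card_sdiff_add_card_inter (insert v (G.neighborFinset v)) B
  rw [sdiff_eq_inter_compl] at hsplit
  have hN := G.minDegree_add_one_le_card_insert_neighborFinset v
  have hNB := hB v
  omega

theorem IsDoubleDominating.doubleDominationNumber_le {D : Finset V}
    (hD : G.IsDoubleDominating D) : G.doubleDominationNumber ≤ D.card :=
  Nat.sInf_le ⟨D, hD, rfl⟩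

theorem limitedPackingNumber_le_of_forall {k : ℕ} {B : Finset V} (hB : G.IsLimitedPacking k B)
    (hmax : ∀ B' : Finset V, G.IsLimitedPacking k B' → B'.card ≤ B.card) :
    G.limitedPackingNumber k ≤ B.card := by
  refine csSup_le ⟨B.card, B, hB, rfl⟩ ?_
  rintro n ⟨B', hB', rfl⟩
  exact hmax B' hB'

end SimpleGraph

/-- If `δ(G) ≥ 2` and `B` is a maximum `(δ(G)-1)`-limited packing in `G`, then the
complement of `B` is a double dominating set; consequently
`γ×₂(G) + L_{δ(G)-1}(G) ≤ n`. -/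
theorem compl_max_limited_packing_isDoubleDominating {V : Type*} [Fintype V] [DecidableEq V]
    (G : SimpleGraph V) [DecidableRel G.Adj] (hδ : 2 ≤ G.minDegree)
    (B : Finset V) (hB : G.IsLimitedPacking (G.minDegree - 1) B)
    (hmax : ∀ B' : Finset V, G.IsLimitedPacking (G.minDegree - 1) B' → B'.card ≤ B.card) :
    G.IsDoubleDominating Bᶜ ∧
    G.doubleDominationNumber + G.limitedPackingNumber (G.minDegree - 1) ≤ Fintype.card V := by
  have hdd : G.IsDoubleDominating Bᶜ := hB.isDoubleDominating_compl (by omega)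
  refine ⟨hdd, ?_⟩
  calc G.doubleDominationNumber + G.limitedPackingNumber (G.minDegree - 1)
      ≤ Bᶜ.card + B.card :=
        add_le_add hdd.doubleDominationNumber_le (G.limitedPackingNumber_le_of_forall hB hmax)
    _ = Fintype.card V := card_compl_add_card B
end

section
/- Let G be a finite simple graph with 2 ≤ δ(G) ≤ Δ(G) + 1. Then L_{δ(G)−1}(G) ≥ ρ(G) + δ(G) − 2. -/
open Finset

/-- A set `B` is a packing in `G` if distinct vertices of `B` have disjoint
closed neighbourhoods. -/
def SimpleGraph.IsPacking {V : Type*} [Fintype V] [DecidableEq V]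
    (G : SimpleGraph V) [DecidableRel G.Adj] (B : Finset V) : Prop :=
  ∀ u ∈ B, ∀ v ∈ B, u ≠ v →
    (insert u (G.neighborFinset u)) ∩ (insert v (G.neighborFinset v)) = ∅

/-- The packing number of `G`. -/
noncomputable def SimpleGraph.packingNumber {V : Type*} [Fintype V] [DecidableEq V]
    (G : SimpleGraph V) [DecidableRel G.Adj] : ℕ :=
  sSup {n : ℕ | ∃ B : Finset V, G.IsPacking B ∧ B.card = n}

/-!
A maximum packing `B` meets every closed neighbourhood at most once, so adding any `δ - 2`
further vertices to it yields a `(δ - 1)`-limited packing of size `ρ + δ - 2`. These vertices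
exist because the closed neighbourhoods of the vertices of `B` are disjoint and have at least
`δ + 1` vertices each, whence `|V| ≥ ρ (δ + 1) ≥ ρ + δ`.
-/

theorem Finset.bddAbove_setOf_card {α : Type*} [Fintype α] (P : Finset α → Prop) :
    BddAbove {n : ℕ | ∃ B : Finset α, P B ∧ B.card = n} :=
  ⟨Fintype.card α, by rintro n ⟨B, -, rfl⟩; exact card_le_univ B⟩

namespace SimpleGraph

variable {V : Type*} [Fintype V] [DecidableEq V] (G : SimpleGraph V) [DecidableRel G.Adj]

lemma isPacking_empty : G.IsPacking ∅ := by
  simp [IsPacking]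

lemma isPacking_singleton (v : V) : G.IsPacking {v} := by
  simp [IsPacking]

lemma exists_isPacking_card_eq_packingNumber :
    ∃ B : Finset V, G.IsPacking B ∧ B.card = G.packingNumber :=
  Nat.sSup_mem (s := {n | ∃ B : Finset V, G.IsPacking B ∧ B.card = n})
    ⟨0, ∅, G.isPacking_empty, rfl⟩ (bddAbove_setOf_card _)

variable {G}

lemma IsPacking.card_le_packingNumber {B : Finset V} (hB : G.IsPacking B) :
    B.card ≤ G.packingNumber :=
  le_csSup (bddAbove_setOf_card _) ⟨B, hB, rfl⟩

lemma IsLimitedPacking.card_le_limitedPackingNumber {k : ℕ} {B : Finset V}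
    (hB : G.IsLimitedPacking k B) : B.card ≤ G.limitedPackingNumber k :=
  le_csSup (bddAbove_setOf_card _) ⟨B, hB, rfl⟩

variable (G) in
lemma one_le_packingNumber [Nonempty V] : 1 ≤ G.packingNumber :=
  (G.isPacking_singleton (Classical.arbitrary V)).card_le_packingNumber

lemma IsPacking.isLimitedPacking_one {B : Finset V} (hB : G.IsPacking B) :
    G.IsLimitedPacking 1 B := by
  intro w
  refine card_le_one.mpr fun a ha b hb => by_contra fun hab => ?_
  have hw : ∀ c ∈ insert w (G.neighborFinset w) ∩ B, w ∈ insert c (G.neighborFinset c) := by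
    intro c hc
    simp only [mem_inter, mem_insert, mem_neighborFinset] at hc ⊢
    exact hc.1.imp Eq.symm fun h => h.symm
  simpa [hB a (mem_inter.mp ha).2 b (mem_inter.mp hb).2 hab] using
    mem_inter.mpr ⟨hw a ha, hw b hb⟩

lemma IsLimitedPacking.union {k : ℕ} {B : Finset V} (hB : G.IsLimitedPacking k B)
    (A : Finset V) : G.IsLimitedPacking (k + A.card) (B ∪ A) := by
  intro w
  calc (insert w (G.neighborFinset w) ∩ (B ∪ A)).card
      ≤ (insert w (G.neighborFinset w) ∩ B).card + (insert w (G.neighborFinset w) ∩ A).card := by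
        rw [inter_union_distrib_left]
        exact card_union_le _ _
    _ ≤ k + A.card := add_le_add (hB w) (card_le_card inter_subset_right)

lemma IsPacking.card_mul_le {B : Finset V} (hB : G.IsPacking B) :
    B.card * (G.minDegree + 1) ≤ Fintype.card V := by
  have hdisj : (B : Set V).PairwiseDisjoint fun u => insert u (G.neighborFinset u) :=
    fun u hu v hv huv => disjoint_iff_inter_eq_empty.mpr (hB u hu v hv huv)
  calc B.card * (G.minDegree + 1)
      ≤ ∑ u ∈ B, (insert u (G.neighborFinset u)).card := by
        rw [← smul_eq_mul]
        refine card_nsmul_le_sum _ _ _ fun u _ => ?_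
        rw [card_insert_of_notMem (G.notMem_neighborFinset_self u), card_neighborFinset_eq_degree]
        exact Nat.succ_le_succ (G.minDegree_le_degree u)
    _ = (B.biUnion fun u => insert u (G.neighborFinset u)).card := (card_biUnion hdisj).symm
    _ ≤ Fintype.card V := card_le_univ _

end SimpleGraph

theorem limitedPackingNumber_min_degree_sub_one_ge_general {V : Type*} [Fintype V] [DecidableEq V]
    (G : SimpleGraph V) [DecidableRel G.Adj]
    (hδ2 : 2 ≤ G.minDegree) :
    G.packingNumber + G.minDegree - 2 ≤ G.limitedPackingNumber (G.minDegree - 1) := by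
  have : Nonempty V := by
    by_contra h
    have : IsEmpty V := not_nonempty_iff.mp h
    have := G.minDegree_of_subsingleton
    omega
  obtain ⟨B, hB, hBcard⟩ := G.exists_isPacking_card_eq_packingNumber
  have hcount := hB.card_mul_le
  have hρ := G.one_le_packingNumber
  have hroom : G.minDegree - 2 ≤ (univ \ B).card := by
    have : B.card + G.minDegree ≤ Fintype.card V := by nlinarith
    rw [card_univ_sdiff]
    omega
  obtain ⟨A, hAB, hAcard⟩ := exists_subset_card_eq hroom
  have hdisj : Disjoint B A := disjoint_of_subset_right hAB disjoint_sdiff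
  have hLP : G.IsLimitedPacking (G.minDegree - 1) (B ∪ A) := by
    have := hB.isLimitedPacking_one.union A
    rwa [hAcard, show 1 + (G.minDegree - 2) = G.minDegree - 1 by omega] at this
  have := hLP.card_le_limitedPackingNumber
  rw [card_union_of_disjoint hdisj, hAcard, hBcard] at this
  omega

/-- If `2 ≤ δ(G) ≤ Δ(G) + 1`, then `L_{δ(G)-1}(G) ≥ ρ(G) + δ(G) - 2`. -/
theorem limitedPackingNumber_min_degree_sub_one_ge {V : Type*} [Fintype V] [DecidableEq V]
    (G : SimpleGraph V) [DecidableRel G.Adj]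
    (hδ2 : 2 ≤ G.minDegree) (hδΔ : G.minDegree ≤ G.maxDegree + 1) :
    G.packingNumber + G.minDegree - 2 ≤ G.limitedPackingNumber (G.minDegree - 1) :=
  limitedPackingNumber_min_degree_sub_one_ge_general G hδ2
end

section
/- Let G be a finite simple graph, let k ≥ 1 be an integer, and let B be a k-limited packing in G of maximum cardinality. Then 2m ≤ (k − 1)|B| + 2k(n − |B|) + (n − |B|)(n − |B| − 1), where n is the order and m is the size of G. -/
/-!
Split the degree sum `2m` over `B` and its complement. A vertex of `B` has at most `k - 1`
neighbours in `B`, every vertex has at most `k` neighbours in `B`, and a vertex of `Bᶜ` has at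
most `|Bᶜ| - 1` neighbours in `Bᶜ`; the edges between `B` and `Bᶜ` are counted twice, once from
each side, and both times they are bounded from the side of `Bᶜ`.
-/

open Finset

namespace SimpleGraph

variable {V : Type*} [Fintype V] [DecidableEq V] (G : SimpleGraph V) [DecidableRel G.Adj]

lemma sum_card_neighborFinset_inter_comm (s t : Finset V) :
    ∑ v ∈ s, #(G.neighborFinset v ∩ t) = ∑ w ∈ t, #(G.neighborFinset w ∩ s) := by
  have above : ∀ v, G.neighborFinset v ∩ t = t.bipartiteAbove G.Adj v := fun v => by
    ext; simp [bipartiteAbove, and_comm]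
  have below : ∀ w, G.neighborFinset w ∩ s = s.bipartiteBelow G.Adj w := fun w => by
    ext; simp [bipartiteBelow, and_comm, G.adj_comm]
  simp only [above, below]
  exact sum_card_bipartiteAbove_eq_sum_card_bipartiteBelow _

lemma sum_degrees_eq_sum_card_neighborFinset_inter (s : Finset V) :
    ∑ v, G.degree v = ∑ v ∈ s, #(G.neighborFinset v ∩ s) +
      2 * ∑ v ∈ sᶜ, #(G.neighborFinset v ∩ s) + ∑ v ∈ sᶜ, #(G.neighborFinset v ∩ sᶜ) := by
  have degree_eq : ∀ v, G.degree v = #(G.neighborFinset v ∩ s) + #(G.neighborFinset v ∩ sᶜ) :=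
    fun v => by rw [← sdiff_eq_inter_compl, card_inter_add_card_sdiff, card_neighborFinset_eq_degree]
  rw [← sum_add_sum_compl s, sum_congr rfl fun v _ => degree_eq v,
    sum_congr rfl fun v _ => degree_eq v, sum_add_distrib, sum_add_distrib,
    G.sum_card_neighborFinset_inter_comm s sᶜ]
  ring

lemma sum_card_neighborFinset_inter_self_add_card_le (s : Finset V) :
    ∑ v ∈ s, #(G.neighborFinset v ∩ s) + #s ≤ #s * #s := by
  have : ∀ v ∈ s, #(G.neighborFinset v ∩ s) + 1 ≤ #s := fun v hv => by
    rw [← card_erase_add_one hv, add_le_add_iff_right]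
    refine card_le_card fun w hw => ?_
    simp only [mem_inter, mem_neighborFinset] at hw
    exact mem_erase.mpr ⟨(G.ne_of_adj hw.1).symm, hw.2⟩
  simpa [sum_add_distrib] using sum_le_card_nsmul s _ _ this

namespace IsLimitedPacking

variable {G} {k : ℕ} {B : Finset V}

lemma card_neighborFinset_inter_le (hB : G.IsLimitedPacking k B) (v : V) :
    #(G.neighborFinset v ∩ B) ≤ k :=
  (card_le_card (inter_subset_inter_right (subset_insert v _))).trans (hB v)

lemma card_neighborFinset_inter_add_one_le (hB : G.IsLimitedPacking k B) {v : V} (hv : v ∈ B) :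
    #(G.neighborFinset v ∩ B) + 1 ≤ k := by
  have := hB v
  rwa [insert_inter_of_mem hv, card_insert_of_notMem (by simp)] at this

lemma sum_card_neighborFinset_inter_le (hB : G.IsLimitedPacking k B) (s : Finset V) :
    ∑ v ∈ s, #(G.neighborFinset v ∩ B) ≤ k * #s := by
  simpa [mul_comm] using sum_le_card_nsmul s _ _ fun v _ => hB.card_neighborFinset_inter_le v

lemma sum_card_neighborFinset_inter_self_add_card_le (hB : G.IsLimitedPacking k B) :
    ∑ v ∈ B, #(G.neighborFinset v ∩ B) + #B ≤ k * #B := by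
  simpa [sum_add_distrib, mul_comm] using
    sum_le_card_nsmul B _ _ fun v hv => hB.card_neighborFinset_inter_add_one_le hv

end IsLimitedPacking

end SimpleGraph

theorem max_limited_packing_edge_bound_general {V : Type*} [Fintype V] [DecidableEq V]
    (G : SimpleGraph V) [DecidableRel G.Adj] (k n m : ℕ)
    (hn : n = Fintype.card V) (hm : m = G.edgeFinset.card)
    (B : Finset V) (hB : G.IsLimitedPacking k B) :
    (2 * m : ℤ) ≤ ((k : ℤ) - 1) * B.card + 2 * k * ((n : ℤ) - B.card) +
      ((n : ℤ) - B.card) * ((n : ℤ) - B.card - 1) := by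
  have inside := hB.sum_card_neighborFinset_inter_self_add_card_le
  have across := hB.sum_card_neighborFinset_inter_le Bᶜ
  have outside := G.sum_card_neighborFinset_inter_self_add_card_le Bᶜ
  have split := G.sum_degrees_eq_sum_card_neighborFinset_inter B
  rw [G.sum_degrees_eq_twice_card_edges, ← hm] at split
  have card_compl : (n : ℤ) - #B = #Bᶜ := by
    rw [hn, ← card_add_card_compl B]; push_cast; ring
  rw [card_compl]
  zify at inside across outside split
  linarith

/-- Edge-count inequality for a maximum `k`-limited packing `B`:
`2m ≤ (k-1)|B| + 2k(n-|B|) + (n-|B|)(n-|B|-1)`. -/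
theorem max_limited_packing_edge_bound {V : Type*} [Fintype V] [DecidableEq V]
    (G : SimpleGraph V) [DecidableRel G.Adj] (k n m : ℕ) (hk : 1 ≤ k)
    (hn : n = Fintype.card V) (hm : m = G.edgeFinset.card)
    (B : Finset V) (hB : G.IsLimitedPacking k B)
    (hmax : ∀ B' : Finset V, G.IsLimitedPacking k B' → B'.card ≤ B.card) :
    (2 * m : ℤ) ≤ ((k : ℤ) - 1) * B.card + 2 * k * ((n : ℤ) - B.card) +
      ((n : ℤ) - B.card) * ((n : ℤ) - B.card - 1) :=
  max_limited_packing_edge_bound_general G k n m hn hm B hB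
end
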